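/- arXiv:1811.06155 — 3 statements merged into one kernel-verified Lean document; each statement's English description precedes it below -/
import Mathlib

section
/- For every natural number k there exists a finite tournament T (an orientation of a complete graph) whose arc set can be partitioned into directed 3-cycles — equivalently, T is obtained from a Steiner triple system by cyclically orienting each triple — such that the cop number of T is at least k. -/
/-!
The tournaments are Cayley tournaments on `G = (ZMod 3) ^ n`: for a connection set `S` containing
exactly one of `x`, `-x` for every `x ≠ 0`, the arcs are `u → u + s` with `s ∈ S`. Since `3 d = 0`,
the arcs of difference `d` split into the directed triangles `a → a + d → a + 2 d → a`.

If every set `D` of at most `k` nonzero elements admits a step `t ∈ S` with `d - t ∈ S` for all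
`d ∈ D`, the robber beats `k` cops: while all cops sit on out-neighbours of the robber none of them
can reach him, and from `r` he moves to `r + t`, which again sends arcs to all the cops.

A random `S` has this property once `n` is large. For fixed `D`, take `M ≈ 3 ^ (n - k) / 2` classes
`q`, no two of them opposite, in `G ⧸ span D`, and a lift `t` of each. The conditions `t ∈ S`,
`d - t ∈ S` only concern elements of `± t + span D`, so they are independent for different `q` and
each family holds with probability at least `2 ^ (-(k + 1))`. A union bound over the at most
`3 ^ (n k)` sets `D` finishes the proof.
-/

open Classical

universe u

namespace CopsRobbers

variable {V : Type u}

/-- `CatchIn A k t c r` holds when, in the cops-and-robbers game on the digraph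
with arc relation `A`, with the `k` cops currently at positions `c`, the robber
currently at `r`, and the cops to move, the cops can guarantee that some cop
occupies the robber's vertex within `t` further rounds (in each round every cop
either stays or moves along an out-arc, then the robber either stays or moves
along an out-arc; capture may occur right after the cops' move or after the
robber's move). -/
inductive CatchIn (A : V → V → Prop) (k : ℕ) : ℕ → (Fin k → V) → V → Prop
  | caught {t : ℕ} {c : Fin k → V} {r : V} (h : ∃ i, c i = r) : CatchIn A k t c r
  | stepCatch {t : ℕ} {c : Fin k → V} {r : V} (c' : Fin k → V)
      (hc : ∀ i, c' i = c i ∨ A (c i) (c' i)) (h : ∃ i, c' i = r) :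
      CatchIn A k (t + 1) c r
  | step {t : ℕ} {c : Fin k → V} {r : V} (c' : Fin k → V)
      (hc : ∀ i, c' i = c i ∨ A (c i) (c' i))
      (h : ∀ r' : V, r' = r ∨ A r r' → CatchIn A k t c' r') :
      CatchIn A k (t + 1) c r

/-- `k` cops can choose initial positions guaranteeing capture within `t` rounds,
no matter which starting vertex the robber then chooses. -/
def CopsWinIn (A : V → V → Prop) (k t : ℕ) : Prop :=
  ∃ c : Fin k → V, ∀ r : V, CatchIn A k t c r

/-- `k` cops have a winning strategy on the digraph with arc relation `A`. -/
def CopsWin (A : V → V → Prop) (k : ℕ) : Prop := ∃ t, CopsWinIn A k t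

/-- The cop number of a digraph: the least `k` such that `k` cops have a winning
strategy. -/
noncomputable def copNumber (A : V → V → Prop) : ℕ := sInf {k | CopsWin A k}

/-- The capture time of a digraph: the least `t` such that `copNumber A` cops
can guarantee capture within `t` rounds. -/
noncomputable def captureTime (A : V → V → Prop) : ℕ :=
  sInf {t | CopsWinIn A (copNumber A) t}

/-- `A` is an orientation of the simple graph `G`: each edge of `G` is given
exactly one direction, and there are no other arcs. -/
def IsOrientation (G : SimpleGraph V) (A : V → V → Prop) : Prop :=
  (∀ u v, G.Adj u v ↔ (A u v ∨ A v u)) ∧ ∀ u v, A u v → ¬ A v u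

/-- An oriented graph: a digraph with no loops and no pair of opposite arcs. -/
def IsOriented (A : V → V → Prop) : Prop := ∀ u v, A u v → ¬ A v u

/-- A digraph is strongly connected if every vertex is reachable from every
other by a directed path. -/
def StronglyConnected (A : V → V → Prop) : Prop :=
  ∀ u v : V, Relation.ReflTransGen A u v


/-- A tournament: a loopless digraph in which every pair of distinct vertices
is joined by exactly one arc. -/
def IsTournament (A : V → V → Prop) : Prop :=
  (∀ v, ¬ A v v) ∧ ∀ u v : V, u ≠ v → (A u v ↔ ¬ A v u)

/-- A set of arcs forming a directed 3-cycle. -/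
def IsCyclicTriple (A : V → V → Prop) (s : Set (V × V)) : Prop :=
  ∃ x y z : V, A x y ∧ A y z ∧ A z x ∧ s = {(x, y), (y, z), (z, x)}

section Game

variable {A : V → V → Prop}

def Escapable (A : V → V → Prop) (m : ℕ) : Prop :=
  ∀ (r : V) (W : Finset V), W.card ≤ m → r ∉ W →
    ∃ r', (r' = r ∨ A r r') ∧ ∀ w ∈ W, A r' w

theorem Escapable.mono {m n : ℕ} (h : Escapable A m) (hnm : n ≤ m) : Escapable A n :=
  fun r W hW => h r W (hW.trans hnm)

theorem IsTournament.isOriented (hA : IsTournament A) : IsOriented A := by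
  intro u v huv hvu
  obtain rfl | hne := eq_or_ne u v
  · exact hA.1 u huv
  · exact (hA.2 u v hne).1 huv hvu

theorem IsOriented.move_ne {x y r : V} (hA : IsOriented A) (hrx : A r x) (hy : y = x ∨ A x y) :
    y ≠ r := by
  rintro rfl
  obtain rfl | hxy := hy
  · exact hA _ _ hrx hrx
  · exact hA _ _ hrx hxy

theorem CatchIn.not_forall_adj {k t : ℕ} {c : Fin k → V} {r : V} (hA : IsOriented A)
    (hesc : Escapable A k) (hcatch : CatchIn A k t c r) : ¬ ∀ i, A r (c i) := by
  induction hcatch with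
  | caught h =>
    obtain ⟨i, hi⟩ := h
    exact fun hdom => hA.move_ne (hdom i) (Or.inl rfl) hi
  | stepCatch c' hc h =>
    obtain ⟨i, hi⟩ := h
    exact fun hdom => hA.move_ne (hdom i) (hc i) hi
  | @step t c r c' hc h ih =>
    intro hdom
    have hr : r ∉ Finset.univ.image c' := by
      simp only [Finset.mem_image, Finset.mem_univ, true_and, not_exists]
      exact fun i => hA.move_ne (hdom i) (hc i)
    obtain ⟨r', hr', hdom'⟩ := hesc r _ (Finset.card_image_le.trans (by simp)) hr
    exact ih r' hr' fun i => hdom' _ (Finset.mem_image_of_mem c' (Finset.mem_univ i))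

theorem not_copsWin_of_escapable [Fintype V] {k : ℕ} (hA : IsOriented A) (hesc : Escapable A k)
    (hk : k < Fintype.card V) : ¬ CopsWin A k := by
  rintro ⟨t, c, hc⟩
  have hcard : (Finset.univ.image c).card ≤ k := Finset.card_image_le.trans (by simp)
  obtain ⟨r, -, hr⟩ : ∃ r ∈ Finset.univ, r ∉ Finset.univ.image c :=
    Finset.exists_mem_notMem_of_card_lt_card (by simpa using hcard.trans_lt hk)
  obtain ⟨r', -, hdom⟩ := hesc r _ hcard hr
  exact (hc r').not_forall_adj hA hesc
    fun i => hdom _ (Finset.mem_image_of_mem c (Finset.mem_univ i))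

theorem copsWin_card [Fintype V] : CopsWin A (Fintype.card V) :=
  ⟨0, (Fintype.equivFin V).symm, fun r => .caught ⟨Fintype.equivFin V r, by simp⟩⟩

theorem lt_copNumber_of_escapable [Fintype V] {k : ℕ} (hA : IsOriented A)
    (hesc : Escapable A k) (hk : k < Fintype.card V) : k < copNumber A := by
  refine Nat.lt_of_succ_le (le_csInf ⟨_, copsWin_card⟩ fun j hj => ?_)
  by_contra! hjk
  exact not_copsWin_of_escapable hA (hesc.mono (Nat.lt_succ_iff.mp hjk)) (by omega) hj

end Game

section Counting

variable {X : Type*} [Fintype X]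

/-- Overwriting `g` by `σ` on `B` maps `𝒮` onto its members that agree with `σ` on `B`, with
fibres of size at most `2 ^ #B`. -/
theorem card_filter_exists_ne_mul_le (σ : X → Bool) {K : ℕ} {B : Finset X} (hB : B.card ≤ K)
    (𝒮 : Finset (X → Bool)) (h𝒮 : ∀ g ∈ 𝒮, ∀ h : X → Bool, (∀ x ∉ B, h x = g x) → h ∈ 𝒮) :
    (𝒮.filter fun g => ∃ x ∈ B, g x ≠ σ x).card * 2 ^ K ≤ (2 ^ K - 1) * 𝒮.card := by
  set good := 𝒮.filter fun g => ∀ x ∈ B, g x = σ x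
  have hmaps : ∀ g ∈ 𝒮, B.piecewise σ g ∈ good := fun g hg =>
    Finset.mem_filter.mpr ⟨h𝒮 g hg _ fun x hx => B.piecewise_eq_of_notMem _ _ hx,
      fun x hx => B.piecewise_eq_of_mem _ _ hx⟩
  have hfibre : ∀ b ∈ good, (𝒮.filter fun g => B.piecewise σ g = b).card ≤ 2 ^ K := by
    intro b _
    have hinj : Set.InjOn (fun (g : X → Bool) (x : B) => g x)
        (𝒮.filter fun g => B.piecewise σ g = b : Finset _) := by
      intro g₁ hg₁ g₂ hg₂ he
      have hb := (Finset.mem_filter.mp hg₁).2.trans (Finset.mem_filter.mp hg₂).2.symm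
      funext x
      by_cases hx : x ∈ B
      · exact congrFun he ⟨x, hx⟩
      · simpa [B.piecewise_eq_of_notMem _ _ hx] using congrFun hb x
    calc _ ≤ (Finset.univ : Finset (B → Bool)).card :=
          Finset.card_le_card_of_injOn _ (fun _ _ => Finset.mem_coe.mpr (Finset.mem_univ _)) hinj
      _ ≤ 2 ^ K := by simpa using Nat.pow_le_pow_right two_pos hB
  have hle : 𝒮.card ≤ 2 ^ K * good.card := Finset.card_le_mul_card_image_of_maps_to hmaps _ hfibre
  have hsplit : good.card + (𝒮.filter fun g => ∃ x ∈ B, g x ≠ σ x).card = 𝒮.card := by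
    simpa only [not_forall, exists_prop] using
      Finset.card_filter_add_card_filter_not (s := 𝒮) (fun g => ∀ x ∈ B, g x = σ x)
  have hpos : 1 ≤ 2 ^ K := Nat.one_le_two_pow
  zify [hpos] at hle hsplit ⊢
  nlinarith

theorem card_forall_exists_ne_mul_le {ι : Type*} (σ : X → Bool) {K : ℕ} (B : ι → Finset X)
    (T : Finset ι) (hB : ∀ t ∈ T, (B t).card ≤ K) (hT : (T : Set ι).PairwiseDisjoint B) :
    (Finset.univ.filter fun g : X → Bool => ∀ t ∈ T, ∃ x ∈ B t, g x ≠ σ x).card * (2 ^ K) ^ T.card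
      ≤ (2 ^ K - 1) ^ T.card * 2 ^ Fintype.card X := by
  induction T using Finset.induction_on with
  | empty => simp
  | @insert a T ha ih =>
    set 𝒮 := Finset.univ.filter fun g : X → Bool => ∀ t ∈ T, ∃ x ∈ B t, g x ≠ σ x
    have h𝒮 : ∀ g ∈ 𝒮, ∀ h : X → Bool, (∀ x ∉ B a, h x = g x) → h ∈ 𝒮 := by
      intro g hg h hgh
      simp only [𝒮, Finset.mem_filter, Finset.mem_univ, true_and] at hg ⊢
      intro t ht
      obtain ⟨x, hx, hne⟩ := hg t ht
      have hxa : x ∉ B a := Finset.disjoint_left.mp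
        (hT (by simp [ht]) (by simp) (by rintro rfl; exact ha ht)) hx
      exact ⟨x, hx, hgh x hxa ▸ hne⟩
    have hfilter : (Finset.univ.filter fun g : X → Bool => ∀ t ∈ insert a T, ∃ x ∈ B t, g x ≠ σ x)
        = 𝒮.filter fun g => ∃ x ∈ B a, g x ≠ σ x := by
      ext g; simp [𝒮, and_comm]
    have hstep := card_filter_exists_ne_mul_le σ (hB a (by simp)) 𝒮 h𝒮
    have hih := ih (fun t ht => hB t (by simp [ht])) (hT.subset (by simp))
    rw [hfilter, Finset.card_insert_of_notMem ha, pow_succ, pow_succ]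
    calc _ = (𝒮.filter fun g => ∃ x ∈ B a, g x ≠ σ x).card * 2 ^ K * (2 ^ K) ^ T.card := by ring
      _ ≤ (2 ^ K - 1) * (𝒮.card * (2 ^ K) ^ T.card) := by
          rw [← mul_assoc]; exact Nat.mul_le_mul_right _ hstep
      _ ≤ (2 ^ K - 1) * ((2 ^ K - 1) ^ T.card * 2 ^ Fintype.card X) := Nat.mul_le_mul_left _ hih
      _ = _ := by ring

end Counting

theorem two_mul_pow_self_le_succ_pow (C : ℕ) (hC : 0 < C) : 2 * C ^ C ≤ (C + 1) ^ C := by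
  have h := pow_add_mul_le_add_pow (a := C) (b := 1) (Nat.zero_le C) (by omega) C
  have hC' : C * C ^ (C - 1) = C ^ C := by rw [← pow_succ', Nat.sub_add_cancel hC]
  calc 2 * C ^ C = C ^ C + C * C ^ (C - 1) * 1 := by rw [mul_one, hC']; ring
    _ ≤ (C + 1) ^ C := h

theorem exists_mul_add_lt_nine_pow (a b : ℕ) : ∃ i, a * i + b < 9 ^ i := by
  refine ⟨a + b + 1, ?_⟩
  have h3 : a + b + 1 < 3 ^ (a + b + 1) := Nat.lt_pow_self (by norm_num)
  rw [show (9 : ℕ) = 3 ^ 2 by norm_num, ← pow_mul, mul_comm 2, pow_mul, sq]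
  nlinarith

theorem three_pow_lt_two_pow (x : ℕ) : 3 ^ x < 2 ^ (2 * x + 1) := by
  rw [pow_succ, pow_mul]
  have := Nat.pow_le_pow_left (show 3 ≤ 2 ^ 2 by norm_num) x
  have := pow_pos (show 0 < 3 by norm_num) x
  omega

/-- The numerical condition of the union bound, with `C + 1 = 2 ^ (m + 1)`. As
`(C / (C + 1)) ^ C ≤ 1 / 2`, the choice `M = C q` with `(3 ^ n) ^ m < 2 ^ q` works, and `n` is taken
large enough for `3 ^ (n - m)` to exceed `2 M`. -/
theorem exists_pow_mul_pow_lt (m C : ℕ) (hC : 0 < C) :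
    ∃ n M, 3 ^ m * (2 * M + 1) ≤ 3 ^ n ∧ (3 ^ n) ^ m * C ^ M < (C + 1) ^ M := by
  obtain ⟨i, hi⟩ := exists_mul_add_lt_nine_pow (8 * C * m) (2 * C * (2 * m * m + 1) + 1)
  set n := m + 2 * i
  set q := 2 * (n * m) + 1
  refine ⟨n, C * q, ?_, ?_⟩
  · have hq : 2 * (C * q) + 1 = 8 * C * m * i + (2 * C * (2 * m * m + 1) + 1) := by
      simp only [n, q]; ring
    rw [pow_add, pow_mul]
    exact Nat.mul_le_mul_left _ (by norm_num; omega)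
  · calc (3 ^ n) ^ m * C ^ (C * q) < 2 ^ q * C ^ (C * q) := by
          rw [← pow_mul]
          exact Nat.mul_lt_mul_of_pos_right (three_pow_lt_two_pow _) (by positivity)
      _ = (2 * C ^ C) ^ q := by rw [mul_pow, pow_mul]
      _ ≤ ((C + 1) ^ C) ^ q := Nat.pow_le_pow_left (two_mul_pow_self_le_succ_pow C hC) q
      _ = (C + 1) ^ (C * q) := by rw [pow_mul]

section Cayley

variable {G : Type*} [AddCommGroup G]

def cayleyArc (S : Set G) (u v : G) : Prop := v - u ∈ S

theorem isTournament_cayleyArc {S : Set G} (h0 : (0 : G) ∉ S)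
    (hneg : ∀ x : G, x ≠ 0 → (-x ∈ S ↔ x ∉ S)) : IsTournament (cayleyArc S) := by
  refine ⟨fun v hv => h0 (by simpa [cayleyArc] using hv), fun u v huv => ?_⟩
  rw [cayleyArc, cayleyArc, ← neg_sub, hneg _ (sub_ne_zero.mpr huv)]

theorem escapable_cayleyArc [Fintype G] {S : Set G} {m : ℕ} (hm : m < Fintype.card G)
    (hS : ∀ D ∈ (Finset.univ.erase (0 : G)).powersetCard m, ∃ t ∈ S, ∀ d ∈ D, d - t ∈ S) :
    Escapable (cayleyArc S) m := by
  intro r W hW hr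
  have hsub : W.image (· - r) ⊆ Finset.univ.erase 0 := by
    intro x hx
    obtain ⟨w, hw, rfl⟩ := Finset.mem_image.mp hx
    exact Finset.mem_erase.mpr ⟨sub_ne_zero.mpr (by rintro rfl; exact hr hw), Finset.mem_univ _⟩
  obtain ⟨D, hWD, hD, hDcard⟩ := Finset.exists_subsuperset_card_eq hsub
    (Finset.card_image_le.trans hW) (by simpa using Nat.le_sub_one_of_lt hm)
  obtain ⟨t, ht, htD⟩ := hS D (Finset.mem_powersetCard.mpr ⟨hD, hDcard⟩)
  refine ⟨r + t, Or.inr (by simpa [cayleyArc] using ht), fun w hw => ?_⟩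
  simpa [cayleyArc, sub_sub] using htD _ (hWD (Finset.mem_image_of_mem _ hw))

/-- The sets `F t` and `-F t`, for `t ∈ T`, are pairwise disjoint. -/
def SignSeparated {ι : Type*} (F : ι → Finset G) (T : Finset ι) : Prop :=
  (∀ t ∈ T, ∀ t' ∈ T, ∀ x ∈ F t, -x ∉ F t') ∧ ∀ t ∈ T, ∀ t' ∈ T, ∀ x ∈ F t, x ∈ F t' → t = t'

/-- The robber's step by `t` dominates `D` exactly when `stepBlock D t` lies in the connection
set. -/
noncomputable def stepBlock (D : Finset G) (t : G) : Finset G := insert t (D.image (· - t))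

theorem card_stepBlock_le (D : Finset G) (t : G) : (stepBlock D t).card ≤ D.card + 1 :=
  (Finset.card_insert_le _ _).trans (Nat.succ_le_succ Finset.card_image_le)

variable [Module (ZMod 3) G]

theorem add_add_self_eq_zero (x : G) : x + x + x = 0 := by
  simpa [succ_nsmul] using ZModModule.char_nsmul_eq_zero 3 x

theorem neg_ne_self {x : G} (hx : x ≠ 0) : -x ≠ x := by
  intro h
  have h2 : x + x = 0 := by simpa [h] using neg_add_cancel x
  exact hx <| calc x = x + x + x - (x + x) := by abel
    _ = 0 := by rw [add_add_self_eq_zero, h2, sub_zero]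

theorem mem_stepBlock {W : Submodule (ZMod 3) G} {D : Finset G} (hDW : ∀ d ∈ D, d ∈ W)
    (hD0 : (0 : G) ∉ D) {t x : G} (hx : x ∈ stepBlock D t) :
    x = t ∨ W.mkQ x = -W.mkQ t ∧ x ≠ -t := by
  rcases Finset.mem_insert.mp hx with rfl | hx
  · exact .inl rfl
  obtain ⟨d, hd, rfl⟩ := Finset.mem_image.mp hx
  refine .inr ⟨?_, fun h => hD0 ?_⟩
  · simp [(Submodule.Quotient.mk_eq_zero W).mpr (hDW d hd)]
  · rwa [← sub_eq_neg_self.mp h]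

theorem natCard_span_le (D : Finset G) :
    Nat.card (Submodule.span (ZMod 3) (D : Set G)) ≤ 3 ^ D.card := by
  rw [Module.natCard_eq_pow_finrank (K := ZMod 3), Nat.card_zmod]
  exact Nat.pow_le_pow_right (by norm_num) (finrank_span_finset_le_card D)

def arcTriangle (a d : G) : Set (G × G) := {(a, a + d), (a + d, a + d + d), (a + d + d, a)}

theorem sub_eq_of_mem_arcTriangle {a d : G} {p : G × G} (hp : p ∈ arcTriangle a d) :
    p.2 - p.1 = d := by
  rcases hp with rfl | rfl | rfl
  · simp
  · simp
  · calc a - (a + d + d) = d - (d + d + d) := by abel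
      _ = d := by rw [add_add_self_eq_zero, sub_zero]

theorem arcTriangle_add_self (a d : G) : arcTriangle (a + d) d = arcTriangle a d := by
  have h : a + d + d + d = a := calc
    a + d + d + d = a + (d + d + d) := by abel
    _ = a := by rw [add_add_self_eq_zero, add_zero]
  simp only [arcTriangle, h]
  ext p
  simp only [Set.mem_insert_iff, Set.mem_singleton_iff]
  tauto

theorem arcTriangle_eq_of_mem {a d u v : G} (h : (u, v) ∈ arcTriangle a d) :
    arcTriangle u (v - u) = arcTriangle a d := by
  rw [sub_eq_of_mem_arcTriangle h]
  rcases h with h | h | h <;> obtain ⟨rfl, rfl⟩ := Prod.mk.inj h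
  · rfl
  · exact arcTriangle_add_self a d
  · rw [arcTriangle_add_self, arcTriangle_add_self]

theorem exists_cyclicTriple_partition (S : Set G) :
    ∃ P : Set (Set (G × G)), (∀ s ∈ P, IsCyclicTriple (cayleyArc S) s) ∧
      ∀ u v : G, cayleyArc S u v → ∃! s, s ∈ P ∧ (u, v) ∈ s := by
  refine ⟨{s | ∃ a, ∃ d ∈ S, s = arcTriangle a d}, ?_, fun u v huv => ?_⟩
  · rintro s ⟨a, d, hd, rfl⟩
    have harc : ∀ p ∈ arcTriangle a d, cayleyArc S p.1 p.2 := fun p hp => by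
      rw [cayleyArc, sub_eq_of_mem_arcTriangle hp]; exact hd
    exact ⟨a, a + d, a + d + d, harc (a, a + d) (by simp [arcTriangle]),
      harc (a + d, a + d + d) (by simp [arcTriangle]), harc (a + d + d, a) (by simp [arcTriangle]),
      rfl⟩
  · refine ⟨arcTriangle u (v - u), ⟨⟨u, v - u, huv, rfl⟩, by simp [arcTriangle]⟩, ?_⟩
    rintro s ⟨⟨a, d, -, rfl⟩, hs⟩
    exact (arcTriangle_eq_of_mem hs).symm

end Cayley

section Sign

variable {G : Type*} [AddCommGroup G] [Fintype G]

/-- An arbitrary choice of one element out of each pair `{x, -x}` with `x ≠ 0`. -/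
noncomputable def IsPos (x : G) : Prop := Fintype.equivFin G x < Fintype.equivFin G (-x)

theorem not_isPos_zero : ¬ IsPos (0 : G) := by simp [IsPos]

theorem IsPos.ne_zero {x : G} (hx : IsPos x) : x ≠ 0 := by
  rintro rfl
  exact not_isPos_zero hx

noncomputable def rep (x : G) : G := if IsPos x then x else -x

theorem eq_or_eq_neg_of_rep_eq {x y : G} (h : rep x = rep y) : x = y ∨ x = -y := by
  unfold rep at h
  split_ifs at h
  · exact .inl h
  · exact .inr h
  · exact .inr (by rw [← h, neg_neg])
  · exact .inl (neg_injective h)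

/-- The bit `g (rep x)` decides which of `x`, `-x` lies in `connectionSet g`, so `g` ranges over
all connection sets of Cayley tournaments on `G`. -/
def connectionSet (g : G → Bool) : Set G := {x | x ≠ 0 ∧ (g (rep x) = true ↔ IsPos x)}

theorem mem_connectionSet {g : G → Bool} {x : G} :
    x ∈ connectionSet g ↔ x ≠ 0 ∧ (g (rep x) = true ↔ IsPos x) :=
  Iff.rfl

/-- Each event `F t ⊆ connectionSet g` prescribes `g` on `(F t).image rep`; sign separation makes
these prescriptions consistent and the events independent. -/
theorem card_forall_not_subset_connectionSet_mul_le {ι : Type*} {F : ι → Finset G}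
    {T : Finset ι} {K : ℕ} (hF : SignSeparated F T) (hK : ∀ t ∈ T, (F t).card ≤ K) :
    (Finset.univ.filter fun g : G → Bool => ∀ t ∈ T, ¬ ↑(F t) ⊆ connectionSet g).card
        * (2 ^ K) ^ T.card
      ≤ (2 ^ K - 1) ^ T.card * 2 ^ Fintype.card G := by
  set σ : G → Bool := fun u => decide (u ∈ T.biUnion F)
  have hagree : ∀ g : G → Bool, ∀ t ∈ T, (∀ u ∈ (F t).image rep, g u = σ u) →
      ↑(F t) ⊆ connectionSet g := by
    intro g t ht hg x hx
    refine ⟨?_, ?_⟩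
    · rintro rfl
      exact hF.1 t ht t ht 0 hx (by simpa using hx)
    rw [hg _ (Finset.mem_image_of_mem rep hx)]
    by_cases hpos : IsPos x
    · simpa [σ, rep, hpos] using ⟨t, ht, hx⟩
    · simpa [σ, rep, hpos] using fun t' ht' => hF.1 t ht t' ht' x hx
  have hdisj : (T : Set ι).PairwiseDisjoint fun t => (F t).image rep := by
    intro t ht t' ht' hne
    simp only [Function.onFun, Finset.disjoint_left, Finset.mem_image]
    rintro _ ⟨x, hx, rfl⟩ ⟨y, hy, hxy⟩
    rcases eq_or_eq_neg_of_rep_eq hxy with rfl | rfl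
    · exact hne (hF.2 t ht t' ht' y hx hy)
    · exact hF.1 t ht t' ht' x hx hy
  refine le_trans (Nat.mul_le_mul_right _ (Finset.card_le_card ?_))
    (card_forall_exists_ne_mul_le σ _ T (fun t ht => Finset.card_image_le.trans (hK t ht)) hdisj)
  intro g hg
  simp only [Finset.mem_filter, Finset.mem_univ, true_and] at hg ⊢
  intro t ht
  by_contra! h
  exact hg t ht (hagree g t ht h)

variable [Module (ZMod 3) G]

theorem isPos_neg {x : G} (hx : x ≠ 0) : IsPos (-x) ↔ ¬ IsPos x := by
  have hne : Fintype.equivFin G (-x) ≠ Fintype.equivFin G x :=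
    (Fintype.equivFin G).injective.ne (neg_ne_self hx)
  rw [IsPos, IsPos, neg_neg, not_lt]
  exact ⟨le_of_lt, fun h => lt_of_le_of_ne h hne⟩

theorem two_mul_card_filter_isPos_add_one :
    2 * (Finset.univ.filter (IsPos (G := G))).card + 1 = Fintype.card G := by
  have hneg : Finset.univ.filter (fun x : G => ¬ IsPos x)
      = insert 0 ((Finset.univ.filter IsPos).image Neg.neg) := by
    ext x
    obtain rfl | hx := eq_or_ne x 0
    · simp [not_isPos_zero]
    · simp [neg_eq_iff_eq_neg, hx, isPos_neg hx]
  have h0 : (0 : G) ∉ (Finset.univ.filter IsPos).image Neg.neg := by simp [not_isPos_zero]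
  rw [← Finset.card_univ, ← Finset.card_filter_add_card_filter_not (s := Finset.univ) IsPos, hneg,
    Finset.card_insert_of_notMem h0, Finset.card_image_of_injective _ neg_injective]
  ring

theorem rep_neg (x : G) : rep (-x) = rep x := by
  obtain rfl | hx := eq_or_ne x 0
  · simp
  by_cases h : IsPos x
  · simp [rep, h, isPos_neg hx]
  · simp [rep, h, (isPos_neg hx).mpr h]

theorem neg_mem_connectionSet {g : G → Bool} {x : G} (hx : x ≠ 0) :
    -x ∈ connectionSet g ↔ x ∉ connectionSet g := by
  rw [mem_connectionSet, mem_connectionSet, rep_neg, isPos_neg hx]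
  simp only [ne_eq, neg_eq_zero, hx, not_false_eq_true, true_and]
  tauto

theorem isTournament_cayleyArc_connectionSet (g : G → Bool) :
    IsTournament (cayleyArc (connectionSet g)) :=
  isTournament_cayleyArc (fun h => h.1 rfl) fun _ hx => neg_mem_connectionSet hx

theorem rep_eq_of_isPos {x y : G} (hy : IsPos y) (h : x = y ∨ x = -y) : rep x = y := by
  rcases h with rfl | rfl
  · simp [rep, hy]
  · rw [rep_neg]; simp [rep, hy]

/-- Every element of the block of `q` lies in the class `q` or `-q`, and the classes in `T` are
positive, so blocks of distinct classes meet neither each other nor each other's negatives. -/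
theorem signSeparated_stepBlock {W : Submodule (ZMod 3) G} {D : Finset G} (hDW : ∀ d ∈ D, d ∈ W)
    (hD0 : (0 : G) ∉ D) {T : Finset (G ⧸ W)} (hT : ∀ q ∈ T, IsPos q) :
    SignSeparated (fun q => stepBlock D q.out) T := by
  have hclass : ∀ q ∈ T, ∀ x ∈ stepBlock D q.out, rep (W.mkQ x) = q := by
    intro q hq x hx
    refine rep_eq_of_isPos (hT q hq) ?_
    rcases mem_stepBlock hDW hD0 hx with rfl | ⟨h, -⟩
    · exact .inl (Submodule.Quotient.mk_out q)
    · exact .inr (by rw [h]; simp)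
  refine ⟨fun q hq q' hq' x hx hx' => ?_, fun q hq q' hq' x hx hx' =>
    (hclass q hq x hx).symm.trans (hclass q' hq' x hx')⟩
  obtain rfl : q = q' := by
    rw [← hclass q hq x hx, ← hclass q' hq' _ hx', map_neg, rep_neg]
  have hq0 : q ≠ 0 := (hT q hq).ne_zero
  rcases mem_stepBlock hDW hD0 hx with rfl | ⟨h, hne⟩
  · rcases mem_stepBlock hDW hD0 hx' with h' | ⟨-, h'⟩
    · exact neg_ne_self hq0 (by simpa using congrArg W.mkQ h')
    · exact h' rfl
  · rcases mem_stepBlock hDW hD0 hx' with h' | ⟨h', -⟩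
    · exact hne (by rw [← h', neg_neg])
    · have h1 : W.mkQ x = q := by simpa using h'
      have h2 : W.mkQ x = -q := by simpa using h
      exact neg_ne_self hq0 (h2.symm.trans h1)

theorem card_not_dominated_mul_le {m M : ℕ} {D : Finset G} (hD0 : (0 : G) ∉ D)
    (hDm : D.card ≤ m) (hM : 3 ^ m * (2 * M + 1) ≤ Fintype.card G) :
    (Finset.univ.filter fun g : G → Bool =>
        ¬ ∃ t ∈ connectionSet g, ∀ d ∈ D, d - t ∈ connectionSet g).card * (2 ^ (m + 1)) ^ M
      ≤ (2 ^ (m + 1) - 1) ^ M * 2 ^ Fintype.card G := by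
  set W := Submodule.span (ZMod 3) (D : Set G)
  have hQ : 2 * M + 1 ≤ Fintype.card (G ⧸ W) := by
    have hW : Nat.card W ≤ 3 ^ m :=
      (natCard_span_le D).trans (Nat.pow_le_pow_right (by norm_num) hDm)
    have hG := Submodule.card_eq_card_quotient_mul_card W
    rw [Nat.card_eq_fintype_card, Nat.card_eq_fintype_card (α := G ⧸ W)] at hG
    refine Nat.le_of_mul_le_mul_left ?_ (pow_pos (by norm_num : 0 < 3) m)
    calc 3 ^ m * (2 * M + 1) ≤ Nat.card W * Fintype.card (G ⧸ W) := hG ▸ hM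
      _ ≤ 3 ^ m * Fintype.card (G ⧸ W) := Nat.mul_le_mul_right _ hW
  obtain ⟨T, hTpos, hTcard⟩ : ∃ T ⊆ Finset.univ.filter IsPos, T.card = M :=
    Finset.exists_subset_card_eq (by have := two_mul_card_filter_isPos_add_one (G := G ⧸ W); omega)
  have hsep := signSeparated_stepBlock (fun d hd => Submodule.subset_span hd) hD0
    (fun q hq => (Finset.mem_filter.mp (hTpos hq)).2)
  have hcount := card_forall_not_subset_connectionSet_mul_le hsep (K := m + 1)
    fun q _ => (card_stepBlock_le D q.out).trans (by omega)
  rw [hTcard] at hcount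
  refine (Nat.mul_le_mul_right _ (Finset.card_le_card fun g hg => ?_)).trans hcount
  simp only [Finset.mem_filter, Finset.mem_univ, true_and] at hg ⊢
  intro q _ hsub
  exact hg ⟨q.out, hsub (Finset.mem_insert_self _ _),
    fun d hd => hsub (Finset.mem_insert_of_mem (Finset.mem_image_of_mem _ hd))⟩

theorem exists_connectionSet_dominating {m M : ℕ} (hM : 3 ^ m * (2 * M + 1) ≤ Fintype.card G)
    (hnum : Fintype.card G ^ m * (2 ^ (m + 1) - 1) ^ M < (2 ^ (m + 1)) ^ M) :
    ∃ g : G → Bool, ∀ D ∈ (Finset.univ.erase (0 : G)).powersetCard m,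
      ∃ t ∈ connectionSet g, ∀ d ∈ D, d - t ∈ connectionSet g := by
  set 𝒟 := (Finset.univ.erase (0 : G)).powersetCard m
  set bad := fun D : Finset G => Finset.univ.filter fun g : G → Bool =>
    ¬ ∃ t ∈ connectionSet g, ∀ d ∈ D, d - t ∈ connectionSet g
  have h𝒟 : 𝒟.card ≤ Fintype.card G ^ m := by
    rw [Finset.card_powersetCard]
    exact (Nat.choose_le_pow _ _).trans (Nat.pow_le_pow_left (Finset.card_erase_le) m)
  have hbad : (𝒟.biUnion bad).card * (2 ^ (m + 1)) ^ M < 2 ^ Fintype.card G * (2 ^ (m + 1)) ^ M :=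
    calc _ ≤ (∑ D ∈ 𝒟, (bad D).card) * (2 ^ (m + 1)) ^ M :=
          Nat.mul_le_mul_right _ Finset.card_biUnion_le
      _ = ∑ D ∈ 𝒟, (bad D).card * (2 ^ (m + 1)) ^ M := Finset.sum_mul _ _ _
      _ ≤ ∑ D ∈ 𝒟, (2 ^ (m + 1) - 1) ^ M * 2 ^ Fintype.card G := by
          refine Finset.sum_le_sum fun D hD => ?_
          obtain ⟨hD, hDm⟩ := Finset.mem_powersetCard.mp hD
          exact card_not_dominated_mul_le (fun h => by simpa using hD h) hDm.le hM
      _ = 𝒟.card * ((2 ^ (m + 1) - 1) ^ M * 2 ^ Fintype.card G) := by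
          rw [Finset.sum_const, smul_eq_mul]
      _ ≤ Fintype.card G ^ m * ((2 ^ (m + 1) - 1) ^ M * 2 ^ Fintype.card G) :=
          Nat.mul_le_mul_right _ h𝒟
      _ < 2 ^ Fintype.card G * (2 ^ (m + 1)) ^ M := by
          rw [← mul_assoc, mul_comm (2 ^ Fintype.card G)]
          exact Nat.mul_lt_mul_of_pos_right hnum (by positivity)
  obtain ⟨g, -, hg⟩ := Finset.exists_mem_notMem_of_card_lt_card (s := 𝒟.biUnion bad)
    (t := Finset.univ) (by simpa using Nat.lt_of_mul_lt_mul_right hbad)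
  refine ⟨g, fun D hD => ?_⟩
  by_contra h
  exact hg (Finset.mem_biUnion.mpr ⟨D, hD, by simpa [bad] using h⟩)

end Sign

/-- For every `k` there is a finite tournament whose arc set is partitioned
into directed 3-cycles (a Steiner triple graph) and whose cop number is at
least `k`. -/
theorem stmt_3 (k : ℕ) :
    ∃ (V : Type) (_ : Fintype V) (A : V → V → Prop),
      IsTournament A ∧
      (∃ P : Set (Set (V × V)),
        (∀ s ∈ P, IsCyclicTriple A s) ∧
        (∀ u v : V, A u v → ∃! s, s ∈ P ∧ (u, v) ∈ s)) ∧
      k ≤ copNumber A := by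
  have hB : 2 ^ (k + 1) - 1 + 1 = 2 ^ (k + 1) := Nat.sub_add_cancel Nat.one_le_two_pow
  obtain ⟨n, M, hM, hnum⟩ := exists_pow_mul_pow_lt k (2 ^ (k + 1) - 1)
    (by have := Nat.one_lt_two_pow (Nat.succ_ne_zero k); omega)
  have hcard : Fintype.card (Fin n → ZMod 3) = 3 ^ n := by simp
  obtain ⟨g, hg⟩ := exists_connectionSet_dominating (G := Fin n → ZMod 3) (hcard ▸ hM)
    (by rwa [hcard, ← hB])
  have hk : k < Fintype.card (Fin n → ZMod 3) :=
    hcard ▸ (Nat.lt_pow_self (by norm_num)).trans_le ((Nat.le_mul_of_pos_right _ (by omega)).trans hM)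
  have hA := isTournament_cayleyArc_connectionSet g
  exact ⟨_, inferInstance, _, hA, exists_cyclicTriple_partition _,
    (lt_copNumber_of_escapable hA.isOriented (escapable_cayleyArc hk hg) hk).le⟩

end CopsRobbers
end

section
/- There exists a cop-win oriented graph D such that in every play of the game in which both players play optimally — the cop following a strategyminimizing the worst-case number of rounds until capture and the robber following a strategy maximizing the number of rounds until capture — there are two consecutive rounds between which the directed distance from the cop's position to the robber's position strictly increases. -/
open Classical

universe u

namespace CopsRobbers

variable {V : Type u}

/-- A legal move in the game: stay put or move along an out-arc. -/
def Legal (A : V → V → Prop) (u v : V) : Prop := v = u ∨ A u v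

/-- The value of the position (one cop at `c`, robber at `r`, cop to move):
the least number of further rounds within which the cop can force capture
(`⊤` if she cannot). -/
noncomputable def copValue (A : V → V → Prop) (c r : V) : ℕ∞ :=
  sInf {n : ℕ∞ | ∃ m : ℕ, (m : ℕ∞) = n ∧ CatchIn A 1 m (fun _ => c) r}

/-- The value, for the cop, of moving to `c'` when the robber stands at `r`:
`0` if this captures the robber, and otherwise the worst-case value over all
of the robber's legal replies. -/
noncomputable def copMoveVal (A : V → V → Prop) (r c' : V) : ℕ∞ :=
  if c' = r then 0 else ⨆ r' ∈ {x : V | Legal A r x}, copValue A c' r'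

/-- The robber has not been caught during rounds `0, …, t`: after no cop move
and after no robber move up to time `t` do the two players share a vertex.
(Here `cop s` and `rob s` are the positions after round `s`; in round `s ≥ 1`
the cop moves first, so she captures at round `s` if `cop s = rob (s - 1)` or
`cop s = rob s`.) -/
def NotCaughtBy (cop rob : ℕ → V) (t : ℕ) : Prop :=
  ∀ s ≤ t, cop s ≠ rob s ∧ (1 ≤ s → cop s ≠ rob (s - 1))

/-- Both players play optimally in the play `(cop, rob)` (for one cop): the cop
chooses her start and each of her moves to minimize the worst-case number of
remaining rounds until capture, and the robber chooses his start and each of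
his moves to maximize the number of rounds until capture, all moves being
legal while the game is in progress. -/
structure OptimalPlay (A : V → V → Prop) (cop rob : ℕ → V) : Prop where
  copInit : ∀ v : V, (⨆ r : V, copValue A (cop 0) r) ≤ ⨆ r : V, copValue A v r
  robInit : ∀ r : V, copValue A (cop 0) r ≤ copValue A (cop 0) (rob 0)
  copLegal : ∀ t : ℕ, NotCaughtBy cop rob t → Legal A (cop t) (cop (t + 1))
  copOpt : ∀ t : ℕ, NotCaughtBy cop rob t → ∀ c' : V, Legal A (cop t) c' →
    copMoveVal A (rob t) (cop (t + 1)) ≤ copMoveVal A (rob t) c'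
  robLegal : ∀ t : ℕ, NotCaughtBy cop rob t → cop (t + 1) ≠ rob t →
    Legal A (rob t) (rob (t + 1))
  robOpt : ∀ t : ℕ, NotCaughtBy cop rob t → cop (t + 1) ≠ rob t →
    ∀ r' : V, Legal A (rob t) r' →
      copValue A (cop (t + 1)) r' ≤ copValue A (cop (t + 1)) (rob (t + 1))

/-- `ReachIn A m u v`: there is a directed walk of length `m` from `u` to `v`. -/
def ReachIn (A : V → V → Prop) : ℕ → V → V → Prop
  | 0, u, v => u = v
  | m + 1, u, w => ∃ v, A u v ∧ ReachIn A m v w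

/-- Directed distance: the length of a shortest directed path from `u` to `v`
(`⊤` if there is none). -/
noncomputable def dDist (A : V → V → Prop) (u v : V) : ℕ∞ :=
  sInf {n : ℕ∞ | ∃ m : ℕ, (m : ℕ∞) = n ∧ ReachIn A m u v}


/-!
The witness is an oriented graph on `Fin 8` whose game values are computed by backward induction
on the number of rounds (`valueTable`). Vertex `0` is the only start from which the cop can force
capture (within five rounds), and `7` is the robber's unique best reply. Every optimal play then
continues with the forced moves: cop `0 → 3`, robber `7 → 4`, cop `3 → 5`, robber stays at `4`.
The cop's detour through `5` is her only move after which capture can still be forced, yet it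
takes her from distance `d(3, 4) = 2` to distance `d(5, 4) = 3`.
-/

section Game

variable {A : V → V → Prop}

instance [DecidableEq V] [DecidableRel A] : DecidableRel (Legal A) :=
  fun u v => inferInstanceAs (Decidable (v = u ∨ A u v))

def catchStep (A : V → V → Prop) (P : V → V → Prop) (c r : V) : Prop :=
  c = r ∨ ∃ c', Legal A c c' ∧ (c' = r ∨ ∀ r', Legal A r r' → P c' r')

instance [Fintype V] [DecidableEq V] [DecidableRel A] (P : V → V → Prop) [DecidableRel P] :
    DecidableRel (catchStep A P) :=
  fun c r => inferInstanceAs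
    (Decidable (c = r ∨ ∃ c', Legal A c c' ∧ (c' = r ∨ ∀ r', Legal A r r' → P c' r')))

def CatchWithin (A : V → V → Prop) : ℕ → V → V → Prop
  | 0, c, r => c = r
  | m + 1, c, r => catchStep A (CatchWithin A m) c r

theorem catchWithin_of_eq {m : ℕ} {c r : V} (h : c = r) : CatchWithin A m c r := by
  cases m
  · exact h
  · exact Or.inl h

theorem CatchIn.catchWithin {m : ℕ} {cs : Fin 1 → V} {r : V} (h : CatchIn A 1 m cs r) :
    CatchWithin A m (cs 0) r := by
  induction h with
  | caught h =>
    obtain ⟨i, hi⟩ := h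
    exact catchWithin_of_eq (Subsingleton.elim i 0 ▸ hi)
  | stepCatch c' hc h =>
    obtain ⟨i, hi⟩ := h
    exact Or.inr ⟨c' 0, hc 0, Or.inl (Subsingleton.elim i 0 ▸ hi)⟩
  | step c' hc _ ih => exact Or.inr ⟨c' 0, hc 0, Or.inr ih⟩

theorem CatchWithin.catchIn : ∀ {m : ℕ} {c r : V},
    CatchWithin A m c r → CatchIn A 1 m (fun _ => c) r
  | 0, _, _, h => .caught ⟨0, h⟩
  | _ + 1, _, _, .inl h => .caught ⟨0, h⟩
  | _ + 1, _, _, .inr ⟨c', hc, .inl h⟩ => .stepCatch (fun _ => c') (fun _ => hc) ⟨0, h⟩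
  | _ + 1, _, _, .inr ⟨c', hc, .inr h⟩ =>
    .step (fun _ => c') (fun _ => hc) fun r' hr' => (h r' hr').catchIn

theorem copValue_eq_of_forall_catchWithin_iff {c r : V} {v : ℕ∞}
    (h : ∀ m : ℕ, CatchWithin A m c r ↔ v ≤ m) : copValue A c r = v := by
  refine le_antisymm ?_ (le_sInf ?_)
  · induction v using ENat.recTopCoe with
    | top => exact le_top
    | coe k => exact sInf_le ⟨k, rfl, ((h k).2 le_rfl).catchIn⟩
  · rintro _ ⟨m, rfl, hm⟩
    exact (h m).1 hm.catchWithin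

theorem copMoveVal_eq_sup [Fintype V] [DecidableEq V] [DecidableRel A] (r c : V) :
    copMoveVal A r c = if c = r then 0 else {x | Legal A r x}.toFinset.sup (copValue A c) := by
  unfold copMoveVal
  split_ifs <;> simp [Finset.sup_eq_iSup]

theorem not_catchIn_zero_cops {t : ℕ} {c : Fin 0 → V} {r : V} : ¬ CatchIn A 0 t c r := by
  intro h
  induction h with
  | caught h => exact h.choose.elim0
  | stepCatch _ _ h => exact h.choose.elim0
  | step _ _ _ ih => exact ih _ (Or.inl rfl)

theorem copNumber_eq_one [Nonempty V] (h : CopsWin A 1) : copNumber A = 1 := by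
  have hzero : ¬ CopsWin A 0 := fun ⟨_, _, hc⟩ =>
    not_catchIn_zero_cops (hc (Classical.arbitrary V))
  refine le_antisymm (Nat.sInf_le h) (Nat.one_le_iff_ne_zero.2 fun h0 => ?_)
  rcases Nat.sInf_eq_zero.1 h0 with h0 | hempty
  · exact hzero h0
  · exact hempty.subset h

end Game

section Distance

variable {A : V → V → Prop}

instance ReachIn.instDecidableRel [Fintype V] [DecidableEq V] [DecidableRel A] :
    ∀ m, DecidableRel (ReachIn A m)
  | 0 => fun u v => inferInstanceAs (Decidable (u = v))
  | m + 1 => fun u w =>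
    have : DecidableRel (ReachIn A m) := ReachIn.instDecidableRel m
    inferInstanceAs (Decidable (∃ v, A u v ∧ ReachIn A m v w))

theorem dDist_eq_of_reachIn {u v : V} {m : ℕ} (h : ReachIn A m u v)
    (hmin : ∀ j < m, ¬ ReachIn A j u v) : dDist A u v = m := by
  refine le_antisymm (sInf_le ⟨m, rfl, h⟩) (le_sInf ?_)
  rintro _ ⟨j, rfl, hj⟩
  exact_mod_cast not_lt.1 fun hlt => hmin j hlt hj

end Distance

section Play

variable {A : V → V → Prop} {cop rob : ℕ → V}

theorem notCaughtBy_zero (h : cop 0 ≠ rob 0) : NotCaughtBy cop rob 0 := by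
  intro s hs
  obtain rfl := Nat.le_zero.1 hs
  exact ⟨h, by omega⟩

theorem NotCaughtBy.succ {t : ℕ} (ht : NotCaughtBy cop rob t) (hcop : cop (t + 1) ≠ rob t)
    (hrob : cop (t + 1) ≠ rob (t + 1)) : NotCaughtBy cop rob (t + 1) := by
  intro s hs
  rcases Nat.le_succ_iff.1 hs with hs | rfl
  · exact ht s hs
  · exact ⟨hrob, fun _ => hcop⟩

namespace OptimalPlay

variable (hp : OptimalPlay A cop rob)
include hp

theorem cop_zero_eq {v₀ : V}
    (h : ∀ v ≠ v₀, (⨆ r, copValue A v₀ r) < ⨆ r, copValue A v r) :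
    cop 0 = v₀ := by
  by_contra hne
  exact (h _ hne).not_ge (hp.copInit v₀)

theorem rob_zero_eq {r₀ : V}
    (h : ∀ r ≠ r₀, copValue A (cop 0) r < copValue A (cop 0) r₀) :
    rob 0 = r₀ := by
  by_contra hne
  exact (h _ hne).not_ge (hp.robInit r₀)

theorem cop_succ_eq {t : ℕ} (ht : NotCaughtBy cop rob t) {c₁ : V} (hc₁ : Legal A (cop t) c₁)
    (h : ∀ c, Legal A (cop t) c → c ≠ c₁ →
      copMoveVal A (rob t) c₁ < copMoveVal A (rob t) c) :
    cop (t + 1) = c₁ := by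
  by_contra hne
  exact (h _ (hp.copLegal t ht) hne).not_ge (hp.copOpt t ht c₁ hc₁)

theorem rob_succ_eq {t : ℕ} (ht : NotCaughtBy cop rob t) (hcop : cop (t + 1) ≠ rob t) {r₁ : V}
    (hr₁ : Legal A (rob t) r₁)
    (h : ∀ r, Legal A (rob t) r → r ≠ r₁ →
      copValue A (cop (t + 1)) r < copValue A (cop (t + 1)) r₁) :
    rob (t + 1) = r₁ := by
  by_contra hne
  exact (h _ (hp.robLegal t ht hcop) hne).not_ge (hp.robOpt t ht hcop r₁ hr₁)

end OptimalPlay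

end Play

section Witness

def arc8 (u v : Fin 8) : Prop :=
  (u.val, v.val) ∈ [(0, 2), (0, 3), (0, 4), (0, 5), (0, 6), (1, 2), (1, 6), (2, 4), (2, 6),
    (3, 5), (3, 7), (4, 6), (5, 1), (5, 6), (6, 3), (7, 4)]

instance : DecidableRel arc8 := fun u v => by unfold arc8; infer_instance

theorem isOriented_arc8 : IsOriented arc8 := by
  unfold IsOriented
  decide

/-- Row `c`, column `r`: the value `copValue arc8 c r`, as certified by
`catchWithin_arc8_iff`. -/
def valueTable : Fin 8 → Fin 8 → ℕ∞ :=
  ![![0, 4, 1, 1, 1, 1, 1, 5],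
    ![⊤, 0, 1, ⊤, 2, ⊤, 1, ⊤],
    ![⊤, ⊤, 0, ⊤, 1, ⊤, 1, ⊤],
    ![⊤, 4, 4, 0, 4, 1, ⊤, 1],
    ![⊤, ⊤, ⊤, ⊤, 0, ⊤, 1, ⊤],
    ![⊤, 1, 3, ⊤, 3, 0, 1, ⊤],
    ![⊤, ⊤, ⊤, 1, ⊤, ⊤, 0, 5],
    ![⊤, ⊤, ⊤, ⊤, 1, ⊤, ⊤, 0]]

theorem valueTable_le_iff_le_five {m : ℕ} (hm : 5 ≤ m) (c r : Fin 8) :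
    valueTable c r ≤ m ↔ valueTable c r ≤ 5 := by
  have hfin : ∀ c r, valueTable c r ≤ 5 ∨ valueTable c r = ⊤ := by decide
  rcases hfin c r with h | h
  · exact ⟨fun _ => h, fun h5 => h5.trans (by exact_mod_cast hm)⟩
  · simp [h]

theorem catchStep_valueTable (m : ℕ) (c r : Fin 8) :
    catchStep arc8 (fun c r => valueTable c r ≤ m) c r ↔ valueTable c r ≤ (m + 1 : ℕ) := by
  rcases lt_or_ge m 5 with hm | hm
  · revert c r
    interval_cases m <;> decide
  · simp only [valueTable_le_iff_le_five hm, valueTable_le_iff_le_five (Nat.le_succ_of_le hm)]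
    revert c r
    decide

theorem catchWithin_arc8_iff (m : ℕ) (c r : Fin 8) :
    CatchWithin arc8 m c r ↔ valueTable c r ≤ m := by
  induction m generalizing c r with
  | zero => exact (by decide : ∀ c r : Fin 8, c = r ↔ valueTable c r ≤ (0 : ℕ)) c r
  | succ m ih =>
    have hm : CatchWithin arc8 m = fun c r => valueTable c r ≤ m := by
      funext c r
      exact propext (ih c r)
    exact (congrArg (fun P => catchStep arc8 P c r) hm).to_iff.trans (catchStep_valueTable m c r)

theorem copValue_arc8 : copValue arc8 = valueTable := by
  funext c r
  exact copValue_eq_of_forall_catchWithin_iff (catchWithin_arc8_iff · c r)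

theorem copNumber_arc8 : copNumber arc8 = 1 := by
  have hwin : ∀ r, valueTable 0 r ≤ (5 : ℕ) := by decide
  exact copNumber_eq_one
    ⟨5, fun _ => 0, fun r => ((catchWithin_arc8_iff 5 0 r).2 (hwin r)).catchIn⟩

theorem OptimalPlay.arc8_opening {cop rob : ℕ → Fin 8} (hp : OptimalPlay arc8 cop rob) :
    cop 1 = 3 ∧ rob 1 = 4 ∧ cop 2 = 5 ∧ rob 2 = 4 ∧ NotCaughtBy cop rob 2 := by
  have hc0 : cop 0 = 0 :=
    hp.cop_zero_eq (by simp only [← Finset.sup_univ_eq_iSup, copValue_arc8]; decide)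
  have hr0 : rob 0 = 7 := hp.rob_zero_eq (by rw [hc0, copValue_arc8]; decide)
  have hN0 : NotCaughtBy cop rob 0 := notCaughtBy_zero (by rw [hc0, hr0]; decide)
  have hc1 : cop 1 = 3 := hp.cop_succ_eq hN0 (by rw [hc0]; decide)
    (by simp only [hc0, hr0, copMoveVal_eq_sup, copValue_arc8]; decide)
  have hr1 : rob 1 = 4 := hp.rob_succ_eq hN0 (by rw [hc1, hr0]; decide) (by rw [hr0]; decide)
    (by simp only [hc1, hr0, copValue_arc8]; decide)
  have hN1 : NotCaughtBy cop rob 1 := hN0.succ (by rw [hc1, hr0]; decide) (by rw [hc1, hr1]; decide)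
  have hc2 : cop 2 = 5 := hp.cop_succ_eq hN1 (by rw [hc1]; decide)
    (by simp only [hc1, hr1, copMoveVal_eq_sup, copValue_arc8]; decide)
  have hr2 : rob 2 = 4 := hp.rob_succ_eq hN1 (by rw [hc2, hr1]; decide) (by rw [hr1]; decide)
    (by simp only [hc2, hr1, copValue_arc8]; decide)
  have hN2 : NotCaughtBy cop rob 2 := hN1.succ (by rw [hc2, hr1]; decide) (by rw [hc2, hr2]; decide)
  exact ⟨hc1, hr1, hc2, hr2, hN2⟩

end Witness

/-- There is a cop-win oriented graph on which, in every optimal play, the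
directed distance from the cop to the robber strictly increases between two
consecutive rounds. -/
theorem stmt_13 :
    ∃ (V : Type) (_ : Fintype V) (A : V → V → Prop),
      IsOriented A ∧ copNumber A = 1 ∧
      ∀ cop rob : ℕ → V, OptimalPlay A cop rob →
        ∃ t : ℕ, NotCaughtBy cop rob (t + 1) ∧
          dDist A (cop t) (rob t) < dDist A (cop (t + 1)) (rob (t + 1)) := by
  refine ⟨Fin 8, inferInstance, arc8, isOriented_arc8, copNumber_arc8, fun cop rob hp => ?_⟩
  obtain ⟨hc1, hr1, hc2, hr2, hN2⟩ := hp.arc8_opening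
  have hd1 : dDist arc8 3 4 = (2 : ℕ) := dDist_eq_of_reachIn (by decide) (by decide)
  have hd2 : dDist arc8 5 4 = (3 : ℕ) := dDist_eq_of_reachIn (by decide) (by decide)
  refine ⟨1, hN2, ?_⟩
  rw [hc1, hr1, hc2, hr2, hd1, hd2]
  norm_num

end CopsRobbers
end

section
/- For every n ≥ 3, in the fully active game of cops and robbers on the directed cycle on n vertices, the minimum number of cops that can guarantee capture of the robber is exactly ⌈n/2⌉. -/
/-!
On a digraph where every vertex has a single out-arc, everyone's moves are forced except the
choice of starting vertices. A cop that starts on the robber's vertex, or one arc behind it,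
catches him at once; if no cop does, the cops and the robber march forward in lockstep and,
when the successor map is injective, that situation never changes. So `k` cops win exactly when
`k` vertices together with their successors cover the digraph; on the directed `n`-cycle this
needs `2k ≥ n`, and the even vertices achieve it.
-/

open Classical

universe u

namespace CopsRobbers

variable {V : Type u}

/-- `ActiveCatchIn A k t c r`: in the fully active game (every cop and the
robber must move along an out-arc on each of their turns; no player may stay
put), with cops at `c` and robber at `r` and the cops to move, the cops can
force capture within `t` further rounds. -/
inductive ActiveCatchIn (A : V → V → Prop) (k : ℕ) : ℕ → (Fin k → V) → V → Prop
  | caught {t : ℕ} {c : Fin k → V} {r : V} (h : ∃ i, c i = r) :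
      ActiveCatchIn A k t c r
  | stepCatch {t : ℕ} {c : Fin k → V} {r : V} (c' : Fin k → V)
      (hc : ∀ i, A (c i) (c' i)) (h : ∃ i, c' i = r) :
      ActiveCatchIn A k (t + 1) c r
  | step {t : ℕ} {c : Fin k → V} {r : V} (c' : Fin k → V)
      (hc : ∀ i, A (c i) (c' i))
      (h : ∀ r' : V, A r r' → ActiveCatchIn A k t c' r') :
      ActiveCatchIn A k (t + 1) c r

/-- `k` cops win the fully active game. -/
def ActiveCopsWin (A : V → V → Prop) (k : ℕ) : Prop :=
  ∃ t : ℕ, ∃ c : Fin k → V, ∀ r : V, ActiveCatchIn A k t c r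

/-- The fully active cop number. -/
noncomputable def activeCopNumber (A : V → V → Prop) : ℕ :=
  sInf {k | ActiveCopsWin A k}

open Function

theorem activeCopNumber_le {A : V → V → Prop} {k : ℕ} (h : ActiveCopsWin A k) :
    activeCopNumber A ≤ k :=
  Nat.sInf_le h

theorem activeCopsWin_activeCopNumber {A : V → V → Prop} {k : ℕ} (h : ActiveCopsWin A k) :
    ActiveCopsWin A (activeCopNumber A) :=
  Nat.sInf_mem (s := {k | ActiveCopsWin A k}) ⟨k, h⟩

theorem activeCatchIn_one_of_exists {f : V → V} {k : ℕ} {c : Fin k → V} {r : V}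
    (h : ∃ i, c i = r ∨ f (c i) = r) : ActiveCatchIn (fun u v => v = f u) k 1 c r := by
  obtain ⟨i, hi | hi⟩ := h
  · exact .caught ⟨i, hi⟩
  · exact .stepCatch (f ∘ c) (fun _ => rfl) ⟨i, hi⟩

theorem not_activeCatchIn_of_injective {f : V → V} (hf : Injective f) {k t : ℕ}
    {c : Fin k → V} {r : V} (h : ∀ i, c i ≠ r ∧ f (c i) ≠ r) :
    ¬ ActiveCatchIn (fun u v => v = f u) k t c r := by
  intro hcatch
  induction hcatch with
  | caught hcaught =>
    obtain ⟨i, hi⟩ := hcaught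
    exact (h i).1 hi
  | stepCatch c' hc hcaught =>
    obtain ⟨i, hi⟩ := hcaught
    exact (h i).2 (hc i ▸ hi)
  | step c' hc _ ih =>
    refine ih (f _) rfl fun i => ?_
    rw [hc i]
    exact ⟨fun e => (h i).1 (hf e), fun e => (h i).2 (hf e)⟩

theorem activeCopsWin_iff_exists_cover {f : V → V} (hf : Injective f) {k : ℕ} :
    ActiveCopsWin (fun u v => v = f u) k ↔
      ∃ c : Fin k → V, ∀ r, ∃ i, c i = r ∨ f (c i) = r := by
  constructor
  · rintro ⟨t, c, hcatch⟩
    refine ⟨c, fun r => ?_⟩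
    by_contra! hescape
    exact not_activeCatchIn_of_injective hf hescape (hcatch r)
  · rintro ⟨c, hcover⟩
    exact ⟨1, c, fun r => activeCatchIn_one_of_exists (hcover r)⟩

theorem card_le_two_mul_of_cover [Fintype V] {f : V → V} {k : ℕ} {c : Fin k → V}
    (hcover : ∀ r, ∃ i, c i = r ∨ f (c i) = r) : Fintype.card V ≤ 2 * k := by
  have hsub : (Finset.univ : Finset V) ⊆ Finset.univ.image c ∪ Finset.univ.image (f ∘ c) := by
    intro r _
    obtain ⟨i, hi | hi⟩ := hcover r
    · exact Finset.mem_union_left _ (Finset.mem_image.2 ⟨i, Finset.mem_univ i, hi⟩)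
    · exact Finset.mem_union_right _ (Finset.mem_image.2 ⟨i, Finset.mem_univ i, hi⟩)
  calc Fintype.card V
      ≤ (Finset.univ.image c ∪ Finset.univ.image (f ∘ c)).card := Finset.card_le_card hsub
    _ ≤ (Finset.univ.image c).card + (Finset.univ.image (f ∘ c)).card :=
      Finset.card_union_le _ _
    _ ≤ k + k := by
      gcongr <;> exact Finset.card_image_le.trans (by simp)
    _ = 2 * k := (two_mul k).symm

theorem exists_cover_zmod (n : ℕ) [NeZero n] :
    ∃ c : Fin ((n + 1) / 2) → ZMod n, ∀ r, ∃ i, c i = r ∨ c i + 1 = r := by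
  refine ⟨fun j => ((2 * j : ℕ) : ZMod n),
    fun r => ⟨⟨r.val / 2, by have := r.val_lt; omega⟩, ?_⟩⟩
  dsimp only
  obtain h | h : 2 * (r.val / 2) = r.val ∨ 2 * (r.val / 2) + 1 = r.val := by omega
  · left
    rw [h, ZMod.natCast_zmod_val]
  · right
    rw [← Nat.cast_add_one, h, ZMod.natCast_zmod_val]

/-- For every `n ≥ 3`, the fully active cop number of the directed cycle on
`n` vertices is exactly `⌈n / 2⌉`. -/
theorem stmt_18 (n : ℕ) (hn : 3 ≤ n) :
    activeCopNumber (fun u v : ZMod n => v = u + 1) = (n + 1) / 2 := by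
  have : NeZero n := ⟨by omega⟩
  have hcover_iff (k : ℕ) :=
    activeCopsWin_iff_exists_cover (V := ZMod n) (k := k) (add_left_injective 1)
  have hwin := (hcover_iff ((n + 1) / 2)).2 (exists_cover_zmod n)
  refine le_antisymm (activeCopNumber_le hwin) ?_
  obtain ⟨c, hcover⟩ := (hcover_iff _).1 (activeCopsWin_activeCopNumber hwin)
  have hcard := card_le_two_mul_of_cover (f := (· + 1)) hcover
  rw [ZMod.card] at hcard
  omega

end CopsRobbers
end
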